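/- Propositional logic has the projective Beth definability property: if an atom p is implicitly σ-definable under a formula φ (with p ∉ σ), then p is explicitly σ-definable under φ, i.e., there is a formula ψ with sig(ψ) ⊆ σ such that φ ⊨ p ↔ ψ. -/

import Mathlib

inductive PropForm : Type where
  | var : ℕ → PropForm
  | tru : PropForm
  | fls : PropForm
  | neg : PropForm → PropForm
  | conj : PropForm → PropForm → PropForm
  | disj : PropForm → PropForm → PropForm
deriving DecidableEq

namespace PropForm

def eval (v : ℕ → Bool) : PropForm → Bool
  | var p => v p
  | tru => true
  | fls => false
  | neg φ => !(eval v φ)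
  | conj φ ψ => eval v φ && eval v ψ
  | disj φ ψ => eval v φ || eval v ψ

def sig : PropForm → Finset ℕ
  | var p => {p}
  | tru => ∅
  | fls => ∅
  | neg φ => sig φ
  | conj φ ψ => sig φ ∪ sig ψ
  | disj φ ψ => sig φ ∪ sig ψ

def impl (φ ψ : PropForm) : PropForm := disj (neg φ) ψ

def iff (φ ψ : PropForm) : PropForm := conj (impl φ ψ) (impl ψ φ)

end PropForm

/-- Semantic entailment: every model of `φ` is a model of `ψ`. -/
def Entails (φ ψ : PropForm) : Prop :=
  ∀ v : ℕ → Bool, φ.eval v = true → ψ.eval v = true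


/-!
Let `s` be the atoms of `φ` that lie in `σ`, and let `f v` say that some model of `φ` with `p`
true agrees with `v` on `s`. For a model `v` of `φ`, `f v` holds iff `v p` does: given such a
model `w`, overwrite it by `v` on `σ` outside the atoms of `φ`; the result is still a model of
`φ`, agrees with `v` on all of `σ`, and (as `p ∉ σ`) keeps `w p = true`, so implicit
definability forces `v p = true`. Since `f` depends only on the finitely many atoms in `s`, it is
the truth function of a formula over `s` (Shannon expansion), and that formula defines `p`.
-/

namespace PropForm

theorem dependsOn_eval (φ : PropForm) : DependsOn (fun v => φ.eval v) ↑φ.sig := by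
  intro v w h
  induction φ with
  | var q => exact h q (Finset.mem_singleton_self q)
  | tru | fls => rfl
  | neg φ ih => simp only [eval, ih h]
  | conj φ ψ ihφ ihψ =>
    simp only [sig, Finset.coe_union, Set.mem_union] at h
    simp only [eval, ihφ fun q hq => h q (.inl hq), ihψ fun q hq => h q (.inr hq)]
  | disj φ ψ ihφ ihψ =>
    simp only [sig, Finset.coe_union, Set.mem_union] at h
    simp only [eval, ihφ fun q hq => h q (.inl hq), ihψ fun q hq => h q (.inr hq)]

theorem eval_iff_eq_true_iff (φ ψ : PropForm) (v : ℕ → Bool) :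
    (φ.iff ψ).eval v = true ↔ φ.eval v = ψ.eval v := by
  simp only [PropForm.iff, impl, eval]
  cases φ.eval v <;> cases ψ.eval v <;> decide

theorem exists_sig_subset_eval_eq {s : Finset ℕ} {f : (ℕ → Bool) → Bool}
    (hf : DependsOn f ↑s) : ∃ ψ : PropForm, ψ.sig ⊆ s ∧ ∀ v, ψ.eval v = f v := by
  classical
  induction s using Finset.induction_on generalizing f with
  | empty =>
    refine ⟨if f 0 then tru else fls, by split <;> simp [sig], fun v => ?_⟩
    rw [show f v = f 0 from hf (by simp)]
    split <;> simp_all [eval]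
  | insert a s _ ih =>
    have hupdate (b : Bool) : DependsOn (fun v => f (Function.update v a b)) ↑s := by
      intro v w h
      refine hf fun q hq => ?_
      by_cases hqa : q = a
      · simp [hqa]
      · simpa [hqa] using h q (by simpa [hqa] using hq)
    obtain ⟨ψt, hψt_sig, hψt⟩ := ih (hupdate true)
    obtain ⟨ψf, hψf_sig, hψf⟩ := ih (hupdate false)
    refine ⟨disj (conj (var a) ψt) (conj (neg (var a)) ψf), ?_, fun v => ?_⟩
    · simp only [sig, Finset.union_subset_iff, Finset.singleton_subset_iff]
      exact ⟨⟨Finset.mem_insert_self a s, hψt_sig.trans (Finset.subset_insert a s)⟩,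
        Finset.mem_insert_self a s, hψf_sig.trans (Finset.subset_insert a s)⟩
    · -- Shannon expansion of `f` at `a`
      have hv : f v = f (Function.update v a (v a)) := by rw [Function.update_eq_self]
      cases hva : v a <;> simp [eval, hψt, hψf, hv, hva]

end PropForm

open PropForm

theorem eval_eq_true_iff_exists_model {φ : PropForm} {σ : Set ℕ} {p : ℕ} (hp : p ∉ σ)
    (himp : ∀ v₁ v₂ : ℕ → Bool, φ.eval v₁ = true → φ.eval v₂ = true →
      (∀ q ∈ σ, v₁ q = v₂ q) → v₁ p = v₂ p)
    {v : ℕ → Bool} (hv : φ.eval v = true) :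
    v p = true ↔ ∃ w, φ.eval w = true ∧ w p = true ∧ ∀ q ∈ ↑φ.sig ∩ σ, w q = v q := by
  classical
  refine ⟨fun hvp => ⟨v, hv, hvp, fun _ _ => rfl⟩, fun ⟨w, hw, hwp, hwv⟩ => ?_⟩
  let w' : ℕ → Bool := fun q => if q ∈ σ ∧ q ∉ φ.sig then v q else w q
  have hw' : φ.eval w' = true :=
    (φ.dependsOn_eval fun q (hq : q ∈ φ.sig) => by simp [w', hq]).trans hw
  have hw'v : ∀ q ∈ σ, v q = w' q := by
    intro q hq
    by_cases hqφ : q ∈ φ.sig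
    · simp [w', hqφ, hwv q ⟨hqφ, hq⟩]
    · simp [w', hq, hqφ]
  rw [himp v w' hv hw' hw'v]
  simpa [w', hp] using hwp

/-- Projective Beth definability property of propositional logic: implicit
`σ`-definability of the atom `p` under `φ` implies explicit `σ`-definability. -/
theorem projective_beth (φ : PropForm) (σ : Set ℕ) (p : ℕ) (hp : p ∉ σ)
    (himp : ∀ v₁ v₂ : ℕ → Bool, φ.eval v₁ = true → φ.eval v₂ = true →
      (∀ q ∈ σ, v₁ q = v₂ q) → v₁ p = v₂ p) :
    ∃ ψ : PropForm, ↑ψ.sig ⊆ σ ∧ Entails φ ((PropForm.var p).iff ψ) := by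
  classical
  let s : Finset ℕ := φ.sig.filter (· ∈ σ)
  let f : (ℕ → Bool) → Bool := fun v =>
    decide (∃ w, φ.eval w = true ∧ w p = true ∧ ∀ q ∈ ↑φ.sig ∩ σ, w q = v q)
  have hf : DependsOn f ↑s := by
    intro v v' h
    have hs : ∀ q ∈ ↑φ.sig ∩ σ, v q = v' q := fun q hq => h q (by simpa [s] using hq)
    simp only [f, decide_eq_decide]
    exact exists_congr fun w => and_congr_right' <| and_congr_right' <|
      forall₂_congr fun q hq => by rw [hs q hq]
  obtain ⟨ψ, hψs, hψ⟩ := exists_sig_subset_eval_eq hf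
  refine ⟨ψ, fun q hq => (Finset.mem_filter.mp (hψs hq)).2, fun v hv => ?_⟩
  rw [eval_iff_eq_true_iff, hψ, eval, Bool.eq_iff_iff]
  simpa [f] using eval_eq_true_iff_exists_model hp himp hv
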